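/- For every symplectic 2n×2n matrix S = [[A, B],[C, D]] there exist unique matrices P = Pᵀ (real symmetric) and L = Lᵀ positive definite such that S(B^{2n}(√ℏ)) = V_P M_L (B^{2n}(√ℏ)) as subsets of ℝ^{2n}, where V_P = [[I, 0],[−P, I]] and M_L = [[L⁻¹, 0],[0, L]]; these matrices are given by L = (AAᵀ + BBᵀ)^{−1/2} and P = −(CAᵀ + DBᵀ)(AAᵀ + BBᵀ)^{−1}. (Hence every quantum blob can be written in this normal form in exactly one way.) -/

import Mathlib

open Matrix

/-- The standard symplectic matrix `J = [[0, I],[−I, 0]]`. -/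
def stdJ (n : ℕ) : Matrix (Fin n ⊕ Fin n) (Fin n ⊕ Fin n) ℝ :=
  fromBlocks 0 1 (-1) 0

/-- A real `2n×2n` matrix is symplectic if `Sᵀ J S = J`. -/
def IsSymplecticMat {n : ℕ} (S : Matrix (Fin n ⊕ Fin n) (Fin n ⊕ Fin n) ℝ) : Prop :=
  Sᵀ * stdJ n * S = stdJ n

/-- `V_P = [[I, 0],[−P, I]]`. -/
def VP {n : ℕ} (P : Matrix (Fin n) (Fin n) ℝ) : Matrix (Fin n ⊕ Fin n) (Fin n ⊕ Fin n) ℝ :=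
  fromBlocks 1 0 (-P) 1

/-- `M_L = [[L⁻¹, 0],[0, L]]`. -/
noncomputable def ML {n : ℕ} (L : Matrix (Fin n) (Fin n) ℝ) :
    Matrix (Fin n ⊕ Fin n) (Fin n ⊕ Fin n) ℝ :=
  fromBlocks L⁻¹ 0 0 L

/-- The closed Euclidean ball of radius `R` centered at `0` in `ℝ^{2n}`. -/
def euclBall (n : ℕ) (R : ℝ) : Set (Fin n ⊕ Fin n → ℝ) :=
  {z | ∑ i, (z i) ^ 2 ≤ R ^ 2}

/-!
An invertible linear image `M(B)` of a ball centred at the origin determines, and is determined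
by, the Gram matrix `M Mᵀ`: `M(B) = N(B)` means that `N⁻¹ M` maps the ball onto itself, i.e. is
orthogonal. So `S(B) = V_P M_L(B)` amounts to `S Sᵀ = (V_P M_L)(V_P M_L)ᵀ`, and the right-hand
side is `[[L⁻², -L⁻² P], [-P L⁻², P L⁻² P + L²]]`. Writing `S Sᵀ = [[G, Rᵀ], [R, H]]` with
`G = AAᵀ + BBᵀ`, comparing blocks forces `L² = G⁻¹` and `P = -R G⁻¹`. Conversely these choices
work because `S Sᵀ` is symplectic as well, which says exactly that `G R = Rᵀ G` (so `P` is
symmetric) and `G H = 1 + Rᵀ Rᵀ` (the Schur complement of `G` is `G⁻¹`). Finally `G` is positive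
definite, being a principal block of the positive definite `S Sᵀ`, so `L` is the unique positive
definite square root of `G⁻¹`.
-/

open Metric Set Matrix

section Ellipsoid

variable {𝕜 : Type*} [RCLike 𝕜] {R : ℝ}

theorem ContinuousLinearMap.norm_map_le_of_mapsTo_closedBall {F G : Type*}
    [NormedAddCommGroup F] [NormedSpace 𝕜 F] [NormedAddCommGroup G] [NormedSpace 𝕜 G]
    {u : F →L[𝕜] G} (hR : 0 < R) (hu : MapsTo u (closedBall 0 R) (closedBall 0 R)) (x : F) :
    ‖u x‖ ≤ ‖x‖ := by
  have hnorm : ‖u‖ ≤ 1 := by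
    refine u.opNorm_le_of_unit_norm zero_le_one fun y hy => ?_
    have hRy : ‖u ((R : 𝕜) • y)‖ ≤ R := mem_closedBall_zero_iff.mp <| hu <| by
      rw [mem_closedBall_zero_iff, norm_smul, hy, RCLike.norm_ofReal, abs_of_pos hR, mul_one]
    rw [map_smul, norm_smul, RCLike.norm_ofReal, abs_of_pos hR] at hRy
    exact le_of_mul_le_mul_left (by linarith) hR
  simpa using u.le_of_opNorm_le hnorm x

variable {E : Type*} [NormedAddCommGroup E] [InnerProductSpace 𝕜 E] [CompleteSpace E]

theorem ContinuousLinearMap.image_closedBall_eq_self_iff_mem_unitary {u : E →L[𝕜] E}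
    (hu : IsUnit u) (hR : 0 < R) :
    u '' closedBall 0 R = closedBall 0 R ↔ u ∈ unitary (E →L[𝕜] E) := by
  refine ⟨fun h => hu.mem_unitary_of_star_mul_self ?_, fun h => ?_⟩
  · obtain ⟨v, rfl⟩ := hu
    have hinv : ∀ x, (↑v⁻¹ : E →L[𝕜] E) ((v : E →L[𝕜] E) x) = x := fun x => by
      rw [← mul_apply_eq_comp, v.inv_mul, one_apply_eq_self]
    have hv : MapsTo (v : E →L[𝕜] E) (closedBall 0 R) (closedBall 0 R) := fun x hx =>
      h ▸ mem_image_of_mem _ hx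
    have hv' : MapsTo (↑v⁻¹ : E →L[𝕜] E) (closedBall 0 R) (closedBall 0 R) := by
      intro y hy
      rw [← h] at hy
      obtain ⟨x, hx, rfl⟩ := hy
      rwa [hinv]
    refine (norm_map_iff_adjoint_comp_self _).mp fun x => le_antisymm
      (norm_map_le_of_mapsTo_closedBall hR hv x) ?_
    simpa only [hinv] using norm_map_le_of_mapsTo_closedBall hR hv' ((v : E →L[𝕜] E) x)
  · have := (Unitary.linearIsometryEquiv ⟨u, h⟩).image_closedBall 0 R
    rwa [map_zero] at this

theorem ContinuousLinearMap.image_closedBall_eq_iff {u v : E →L[𝕜] E} (hu : IsUnit u)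
    (hv : IsUnit v) (hR : 0 < R) :
    u '' closedBall 0 R = v '' closedBall 0 R ↔ u * star u = v * star v := by
  obtain ⟨v, rfl⟩ := hv
  obtain ⟨w, hw, rfl⟩ : ∃ w, IsUnit w ∧ u = v * w :=
    ⟨_, v⁻¹.isUnit.mul hu, by rw [← mul_assoc, v.mul_inv, one_mul]⟩
  have hinj : Function.Injective (v : E →L[𝕜] E) := (homeomorphOfUnit v).injective
  have himage : ((v : E →L[𝕜] E) * w) '' closedBall 0 R =
      (v : E →L[𝕜] E) '' (w '' closedBall 0 R) :=
    image_comp (v : E →L[𝕜] E) w _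
  rw [himage, hinj.image_injective.eq_iff, image_closedBall_eq_self_iff_mem_unitary hw hR,
    hw.mem_unitary_iff_mul_star_self, star_mul, ← mul_assoc, mul_assoc (v : E →L[𝕜] E) w,
    v.isUnit.star.mul_left_inj, v.isUnit.mul_eq_left]

theorem Matrix.image_toEuclideanCLM_closedBall_eq_iff {ι : Type*} [Fintype ι] [DecidableEq ι]
    {M N : Matrix ι ι 𝕜} (hM : IsUnit M) (hN : IsUnit N) (hR : 0 < R) :
    toEuclideanCLM (𝕜 := 𝕜) M '' closedBall 0 R = toEuclideanCLM (𝕜 := 𝕜) N '' closedBall 0 R ↔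
      M * Mᴴ = N * Nᴴ := by
  rw [ContinuousLinearMap.image_closedBall_eq_iff (hM.map _) (hN.map _) hR, ← map_star,
    ← map_star, ← map_mul, ← map_mul, EmbeddingLike.apply_eq_iff_eq, star_eq_conjTranspose,
    star_eq_conjTranspose]

variable {n : ℕ}

theorem mem_euclBall_iff (hR : 0 ≤ R) {z : Fin n ⊕ Fin n → ℝ} :
    z ∈ euclBall n R ↔ ‖WithLp.toLp 2 z‖ ≤ R := by
  rw [← sq_le_sq₀ (norm_nonneg _) hR, EuclideanSpace.real_norm_sq_eq]
  rfl

theorem euclBall_eq_image_closedBall (hR : 0 ≤ R) :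
    euclBall n R = WithLp.ofLp '' closedBall (0 : EuclideanSpace ℝ (Fin n ⊕ Fin n)) R := by
  ext z
  refine ⟨fun hz => ⟨WithLp.toLp 2 z, mem_closedBall_zero_iff.mpr ((mem_euclBall_iff hR).mp hz),
    rfl⟩, ?_⟩
  rintro ⟨x, hx, rfl⟩
  exact (mem_euclBall_iff hR).mpr (mem_closedBall_zero_iff.mp hx)

theorem image_mulVec_euclBall (M : Matrix (Fin n ⊕ Fin n) (Fin n ⊕ Fin n) ℝ) (hR : 0 ≤ R) :
    (fun z => M *ᵥ z) '' euclBall n R =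
      WithLp.ofLp '' (toEuclideanCLM (𝕜 := ℝ) M '' closedBall 0 R) := by
  rw [euclBall_eq_image_closedBall hR, image_image, image_image]
  simp only [ofLp_toEuclideanCLM]

theorem image_mulVec_euclBall_eq_iff {M N : Matrix (Fin n ⊕ Fin n) (Fin n ⊕ Fin n) ℝ}
    (hM : IsUnit M) (hN : IsUnit N) (hR : 0 < R) :
    (fun z => M *ᵥ z) '' euclBall n R = (fun z => N *ᵥ z) '' euclBall n R ↔
      M * Mᵀ = N * Nᵀ := by
  rw [image_mulVec_euclBall M hR.le, image_mulVec_euclBall N hR.le,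
    (WithLp.ofLp_injective 2).image_injective.eq_iff,
    Matrix.image_toEuclideanCLM_closedBall_eq_iff hM hN hR, conjTranspose_eq_transpose_of_trivial,
    conjTranspose_eq_transpose_of_trivial]

end Ellipsoid

section MatrixLemmas

variable {m p : Type*} [Fintype m] [Fintype p]

theorem Matrix.nonsing_inv_mul_eq_mul_nonsing_inv [DecidableEq m] {α : Type*} [CommRing α]
    {G R₁ R₂ : Matrix m m α} (hG : IsUnit G.det) (h : G * R₂ = R₁ * G) :
    G⁻¹ * R₁ = R₂ * G⁻¹ :=
  calc G⁻¹ * R₁ = G⁻¹ * (R₁ * G) * G⁻¹ := by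
        rw [← mul_assoc, mul_nonsing_inv_cancel_right G _ hG]
    _ = R₂ * G⁻¹ := by rw [← h, nonsing_inv_mul_cancel_left G _ hG]

theorem Matrix.fromBlocks_mul_transpose_self {α : Type*} [CommRing α] (A : Matrix m m α)
    (B : Matrix m p α) (C : Matrix p m α) (D : Matrix p p α) :
    fromBlocks A B C D * (fromBlocks A B C D)ᵀ =
      fromBlocks (A * Aᵀ + B * Bᵀ) (A * Cᵀ + B * Dᵀ) (C * Aᵀ + D * Bᵀ) (C * Cᵀ + D * Dᵀ) := by
  rw [fromBlocks_transpose, fromBlocks_multiply]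

theorem Matrix.posDef_mul_transpose_add_mul_transpose [DecidableEq m] [DecidableEq p]
    {A : Matrix m m ℝ} {B : Matrix m p ℝ} {C : Matrix p m ℝ} {D : Matrix p p ℝ}
    (hS : IsUnit (fromBlocks A B C D)) :
    (A * Aᵀ + B * Bᵀ).PosDef := by
  have := (PosDef.mul_conjTranspose_self _ (vecMul_injective_of_isUnit hS)).submatrix
    Sum.inl_injective
  rwa [conjTranspose_eq_transpose_of_trivial, fromBlocks_mul_transpose_self] at this

open scoped ComplexOrder MatrixOrder in
theorem Matrix.PosDef.existsUnique_posDef_mul_self_eq [DecidableEq m] {𝕜 : Type*} [RCLike 𝕜]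
    {M : Matrix m m 𝕜} (hM : M.PosDef) : ∃! L : Matrix m m 𝕜, L.PosDef ∧ L * L = M :=
  ⟨CFC.sqrt M, ⟨(IsStrictlyPositive.sqrt M hM.isStrictlyPositive).posDef,
      CFC.sqrt_mul_sqrt_self M hM.posSemidef.nonneg⟩,
    fun _ ⟨hL, h⟩ => (CFC.sqrt_unique h hL.posSemidef.nonneg).symm⟩

end MatrixLemmas

section Symplectic

variable {n : ℕ}

theorem stdJ_eq_neg_J : stdJ n = -J (Fin n) ℝ := by
  simp [stdJ, J, fromBlocks_neg]

theorem isSymplecticMat_iff_mem_symplecticGroup {S : Matrix (Fin n ⊕ Fin n) (Fin n ⊕ Fin n) ℝ} :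
    IsSymplecticMat S ↔ S ∈ symplecticGroup (Fin n) ℝ := by
  rw [SymplecticGroup.mem_iff', IsSymplecticMat, stdJ_eq_neg_J, mul_neg, neg_mul, neg_inj]

theorem fromBlocks_stdJ_relations {G R₁ R₂ H : Matrix (Fin n) (Fin n) ℝ}
    (h : fromBlocks G R₁ R₂ H * stdJ n * fromBlocks G R₁ R₂ H = stdJ n) :
    G * R₂ = R₁ * G ∧ G * H = 1 + R₁ * R₁ := by
  simp only [stdJ, fromBlocks_multiply, Matrix.mul_zero, Matrix.mul_one, Matrix.mul_neg,
    Matrix.neg_mul, add_zero, zero_add, fromBlocks_inj] at h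
  obtain ⟨h₁₁, h₁₂, -, -⟩ := h
  constructor
  · rw [← sub_eq_zero, ← h₁₁]; abel
  · rw [← h₁₂]; abel

namespace IsSymplecticMat

variable {S : Matrix (Fin n ⊕ Fin n) (Fin n ⊕ Fin n) ℝ}

theorem isUnit (hS : IsSymplecticMat S) : IsUnit S :=
  (isUnit_iff_isUnit_det S).mpr <|
    SymplecticGroup.symplectic_det (isSymplecticMat_iff_mem_symplecticGroup.mp hS)

theorem mul_stdJ_mul_transpose (hS : IsSymplecticMat S) : S * stdJ n * Sᵀ = stdJ n := by
  rw [stdJ_eq_neg_J, mul_neg, neg_mul,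
    SymplecticGroup.mem_iff.mp (isSymplecticMat_iff_mem_symplecticGroup.mp hS)]

theorem mul_transpose_mul_stdJ_mul (hS : IsSymplecticMat S) :
    S * Sᵀ * stdJ n * (S * Sᵀ) = stdJ n :=
  calc S * Sᵀ * stdJ n * (S * Sᵀ) = S * (Sᵀ * stdJ n * S) * Sᵀ := by simp only [mul_assoc]
    _ = stdJ n := by rw [hS, hS.mul_stdJ_mul_transpose]

variable {A B C D : Matrix (Fin n) (Fin n) ℝ}

theorem gram_relations (hS : IsSymplecticMat (fromBlocks A B C D)) :
    (A * Aᵀ + B * Bᵀ) * (C * Aᵀ + D * Bᵀ) = (A * Cᵀ + B * Dᵀ) * (A * Aᵀ + B * Bᵀ) ∧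
      (A * Aᵀ + B * Bᵀ) * (C * Cᵀ + D * Dᵀ) = 1 + (A * Cᵀ + B * Dᵀ) * (A * Cᵀ + B * Dᵀ) := by
  have hW := hS.mul_transpose_mul_stdJ_mul
  rw [fromBlocks_mul_transpose_self] at hW
  exact fromBlocks_stdJ_relations hW

theorem isSymm_mul_inv (hS : IsSymplecticMat (fromBlocks A B C D)) :
    ((C * Aᵀ + D * Bᵀ) * (A * Aᵀ + B * Bᵀ)⁻¹).IsSymm := by
  have hG := posDef_mul_transpose_add_mul_transpose hS.isUnit
  rw [IsSymm, transpose_mul, transpose_nonsing_inv, (isHermitian_iff_isSymm.mp hG.isHermitian).eq,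
    transpose_add, transpose_mul, transpose_mul, transpose_transpose, transpose_transpose,
    nonsing_inv_mul_eq_mul_nonsing_inv ((isUnit_iff_isUnit_det _).mp hG.isUnit)
      hS.gram_relations.1]

end IsSymplecticMat

end Symplectic

section NormalForm

variable {n : ℕ}

theorem isUnit_VP_mul_ML (P : Matrix (Fin n) (Fin n) ℝ) {L : Matrix (Fin n) (Fin n) ℝ}
    (hL : IsUnit L) : IsUnit (VP P * ML L) := by
  rw [isUnit_iff_isUnit_det, det_mul, VP, ML, det_fromBlocks_zero₁₂, det_fromBlocks_zero₁₂,
    det_one, one_mul, ← det_mul, nonsing_inv_mul L ((isUnit_iff_isUnit_det L).mp hL), det_one,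
    one_mul]
  exact isUnit_one

theorem VP_mul_ML_mul_transpose {P L : Matrix (Fin n) (Fin n) ℝ} (hP : P.IsSymm)
    (hL : L.IsSymm) :
    VP P * ML L * (VP P * ML L)ᵀ =
      fromBlocks (L * L)⁻¹ (-((L * L)⁻¹ * P)) (-(P * (L * L)⁻¹)) (P * (L * L)⁻¹ * P + L * L) := by
  have hLinv : (L⁻¹)ᵀ = L⁻¹ := by rw [transpose_nonsing_inv, hL.eq]
  simp only [VP, ML, fromBlocks_transpose, fromBlocks_multiply, transpose_zero, transpose_neg,
    transpose_mul, hP.eq, hL.eq, hLinv, Matrix.mul_inv_rev, Matrix.mul_zero, Matrix.zero_mul,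
    Matrix.one_mul, Matrix.mul_neg, Matrix.neg_mul, add_zero, zero_add, neg_neg, mul_assoc]

theorem VP_mul_ML_mul_transpose_eq_fromBlocks_iff {P L G R₁ R₂ H : Matrix (Fin n) (Fin n) ℝ}
    (hP : P.IsSymm) (hL : L.IsSymm) (hLu : IsUnit L) (hG : IsUnit G)
    (hGR : G * R₂ = R₁ * G) (hGH : G * H = 1 + R₁ * R₁) :
    VP P * ML L * (VP P * ML L)ᵀ = fromBlocks G R₁ R₂ H ↔ L * L = G⁻¹ ∧ P = -(R₂ * G⁻¹) := by
  have hGdet := (isUnit_iff_isUnit_det G).mp hG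
  rw [VP_mul_ML_mul_transpose hP hL, fromBlocks_inj]
  constructor
  · rintro ⟨hLL, -, hPR, -⟩
    refine ⟨by rw [← hLL, nonsing_inv_nonsing_inv _ ((isUnit_iff_isUnit_det _).mp (hLu.mul hLu))],
      ?_⟩
    rw [← hPR, hLL, Matrix.neg_mul, neg_neg, mul_nonsing_inv_cancel_right G _ hGdet]
  · rintro ⟨hLL, rfl⟩
    have hR₁ := nonsing_inv_mul_eq_mul_nonsing_inv hGdet hGR
    have hH : H = G⁻¹ + R₂ * R₂ * G⁻¹ := by
      rw [← nonsing_inv_mul_cancel_left G H hGdet, hGH, Matrix.mul_add, mul_one, ← mul_assoc,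
        hR₁, mul_assoc, hR₁, mul_assoc]
    rw [hLL, nonsing_inv_nonsing_inv _ hGdet, hH]
    refine ⟨rfl, ?_, ?_, ?_⟩
    · rw [Matrix.mul_neg, neg_neg, ← mul_assoc, hGR, mul_nonsing_inv_cancel_right G _ hGdet]
    · rw [Matrix.neg_mul, neg_neg, nonsing_inv_mul_cancel_right G _ hGdet]
    · rw [Matrix.neg_mul, nonsing_inv_mul_cancel_right G _ hGdet, Matrix.neg_mul, Matrix.mul_neg,
        neg_neg, add_comm, mul_assoc]

theorem IsSymplecticMat.image_euclBall_eq_iff {A B C D P L : Matrix (Fin n) (Fin n) ℝ} {R : ℝ}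
    (hS : IsSymplecticMat (fromBlocks A B C D)) (hR : 0 < R) (hP : P.IsSymm) (hL : L.PosDef) :
    (fun z => fromBlocks A B C D *ᵥ z) '' euclBall n R =
        (fun z => (VP P * ML L) *ᵥ z) '' euclBall n R ↔
      L * L = (A * Aᵀ + B * Bᵀ)⁻¹ ∧ P = -((C * Aᵀ + D * Bᵀ) * (A * Aᵀ + B * Bᵀ)⁻¹) := by
  rw [image_mulVec_euclBall_eq_iff hS.isUnit (isUnit_VP_mul_ML P hL.isUnit) hR,
    fromBlocks_mul_transpose_self, eq_comm,
    VP_mul_ML_mul_transpose_eq_fromBlocks_iff hP (isHermitian_iff_isSymm.mp hL.isHermitian)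
      hL.isUnit (posDef_mul_transpose_add_mul_transpose hS.isUnit).isUnit hS.gram_relations.1
      hS.gram_relations.2]

end NormalForm

theorem quantum_blob_normal_form_general
    (n : ℕ) (ℏ : ℝ) (hℏ : 0 < ℏ)
    (A B C D : Matrix (Fin n) (Fin n) ℝ)
    (hS : IsSymplecticMat (fromBlocks A B C D)) :
    (∃! PL : Matrix (Fin n) (Fin n) ℝ × Matrix (Fin n) (Fin n) ℝ,
        PL.1.IsSymm ∧ PL.2.IsSymm ∧ PL.2.PosDef ∧
        (fun z => (fromBlocks A B C D).mulVec z) '' euclBall n (Real.sqrt ℏ) =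
          (fun z => (VP PL.1 * ML PL.2).mulVec z) '' euclBall n (Real.sqrt ℏ)) ∧
      ∀ P L : Matrix (Fin n) (Fin n) ℝ,
        P.IsSymm → L.IsSymm → L.PosDef →
        (fun z => (fromBlocks A B C D).mulVec z) '' euclBall n (Real.sqrt ℏ) =
          (fun z => (VP P * ML L).mulVec z) '' euclBall n (Real.sqrt ℏ) →
        L * L = (A * Aᵀ + B * Bᵀ)⁻¹ ∧
          P = -((C * Aᵀ + D * Bᵀ) * (A * Aᵀ + B * Bᵀ)⁻¹) := by
  have hR : 0 < Real.sqrt ℏ := Real.sqrt_pos.mpr hℏ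
  obtain ⟨L₀, ⟨hL₀, hL₀L₀⟩, hL₀_unique⟩ :=
    (posDef_mul_transpose_add_mul_transpose hS.isUnit).inv.existsUnique_posDef_mul_self_eq
  have hP₀ := hS.isSymm_mul_inv.neg
  refine ⟨⟨(_, L₀), ⟨hP₀, isHermitian_iff_isSymm.mp hL₀.isHermitian, hL₀,
    (hS.image_euclBall_eq_iff hR hP₀ hL₀).mpr ⟨hL₀L₀, rfl⟩⟩, ?_⟩,
    fun P L hP _ hL => (hS.image_euclBall_eq_iff hR hP hL).mp⟩
  rintro ⟨P, L⟩ ⟨hP, -, hL, himage⟩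
  obtain ⟨hLL, rfl⟩ := (hS.image_euclBall_eq_iff hR hP hL).mp himage
  exact Prod.ext rfl (hL₀_unique L ⟨hL, hLL⟩)

/-- Normal form of quantum blobs: for every symplectic `S = [[A,B],[C,D]]` there are unique
`P = Pᵀ` and `L = Lᵀ > 0` with `S(B^{2n}(√ℏ)) = V_P M_L (B^{2n}(√ℏ))`; they are given by
`L = (AAᵀ + BBᵀ)^{−1/2}` (i.e. `L² = (AAᵀ + BBᵀ)⁻¹`) and `P = −(CAᵀ + DBᵀ)(AAᵀ + BBᵀ)⁻¹`. -/
theorem quantum_blob_normal_form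
    (n : ℕ) (hn : 1 ≤ n) (ℏ : ℝ) (hℏ : 0 < ℏ)
    (A B C D : Matrix (Fin n) (Fin n) ℝ)
    (hS : IsSymplecticMat (fromBlocks A B C D)) :
    (∃! PL : Matrix (Fin n) (Fin n) ℝ × Matrix (Fin n) (Fin n) ℝ,
        PL.1.IsSymm ∧ PL.2.IsSymm ∧ PL.2.PosDef ∧
        (fun z => (fromBlocks A B C D).mulVec z) '' euclBall n (Real.sqrt ℏ) =
          (fun z => (VP PL.1 * ML PL.2).mulVec z) '' euclBall n (Real.sqrt ℏ)) ∧
      ∀ P L : Matrix (Fin n) (Fin n) ℝ,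
        P.IsSymm → L.IsSymm → L.PosDef →
        (fun z => (fromBlocks A B C D).mulVec z) '' euclBall n (Real.sqrt ℏ) =
          (fun z => (VP P * ML L).mulVec z) '' euclBall n (Real.sqrt ℏ) →
        L * L = (A * Aᵀ + B * Bᵀ)⁻¹ ∧
          P = -((C * Aᵀ + D * Bᵀ) * (A * Aᵀ + B * Bᵀ)⁻¹) :=
  quantum_blob_normal_form_general n ℏ hℏ A B C D hS
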